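/- Let P be an n×n real symmetric idempotent matrix; let (Q_j)_{j∈J} be a finite mutually orthogonal family of n×n real symmetric idempotents with I_Q := Σ_{j∈J} Q_j, structure balanced in relation to P with efficiency factors (λ_j)_{j∈J}; fix k ∈ J with λ_k ≠ 0 and set P▷Q_k := λ_k⁻¹·P·Q_k·P. Let (R_m)_{m∈M} be a finite mutually orthogonal family of n×n real symmetric idempotents with R_m·I_Q = R_m for all m, structure balanced in relation to each Q_j with efficiency factors (μ_{jm}). Then (P▷Q_k)⊢𝓡 = P▷(Q_k⊢𝓡); that is, (P▷Q_k) − Σ_{m : μ_{km} ≠ 0} λ_k⁻¹·μ_{km}⁻¹·(P▷Q_k)·R_m·(P▷Q_k) = λ_k⁻¹·P·(Q_k − Σ_{m : μ_{km} ≠ 0} μ_{km}⁻¹·Q_k·R_m·Q_k)·P. -/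

import Mathlib

/-!
Each `R m` satisfies `R m * ∑ Q j = R m`, and by symmetry also `(∑ Q j) * R m = R m`. Balance of
the `Q j` in relation to `P` collapses `Q k * P * ∑ Q j` to `λ_k • Q k`, so the outer `P` of
`P ▷ Q_k` is absorbed next to `R m`: `(P ▷ Q_k) * R m * (P ▷ Q_k) = P * (Q k * R m * Q k) * P`.
The residual identity then holds summand by summand.
-/

open Matrix

theorem Matrix.mul_eq_self_of_mul_eq_self_of_transpose_eq {m α : Type*} [Fintype m]
    [CommSemiring α] {S r : Matrix m m α} (hS : Sᵀ = S) (hr : rᵀ = r) (h : r * S = r) :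
    S * r = r := by
  simpa only [transpose_mul, hS, hr] using congrArg transpose h

section Balanced

variable {𝕜 A J : Type*} [Fintype J] {P : A} {Q : J → A} {lam : J → 𝕜}

theorem mul_mul_sum_eq_smul_of_balanced [Semiring A] [SMul 𝕜 A]
    (hbal : ∀ j, Q j * P * Q j = lam j • Q j) (hadj : ∀ j k, j ≠ k → Q j * P * Q k = 0)
    (k : J) : Q k * P * ∑ j, Q j = lam k • Q k := by
  rw [Finset.mul_sum, Finset.sum_eq_single_of_mem k (Finset.mem_univ k)
    fun j _ hj => hadj k j (Ne.symm hj), hbal]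

theorem sum_mul_mul_eq_smul_of_balanced [Semiring A] [SMul 𝕜 A]
    (hbal : ∀ j, Q j * P * Q j = lam j • Q j) (hadj : ∀ j k, j ≠ k → Q j * P * Q k = 0)
    (k : J) : (∑ j, Q j) * P * Q k = lam k • Q k := by
  rw [Finset.sum_mul, Finset.sum_mul, Finset.sum_eq_single_of_mem k (Finset.mem_univ k)
    fun j _ hj => hadj j k hj, hbal]

theorem pertaining_mul_mul_pertaining_of_balanced [Field 𝕜] [Ring A] [Algebra 𝕜 A]
    (hbal : ∀ j, Q j * P * Q j = lam j • Q j) (hadj : ∀ j k, j ≠ k → Q j * P * Q k = 0)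
    {k : J} (hk : lam k ≠ 0) {r : A} (hleft : (∑ j, Q j) * r = r)
    (hright : r * ∑ j, Q j = r) :
    ((lam k)⁻¹ • (P * Q k * P)) * r * ((lam k)⁻¹ • (P * Q k * P)) =
      P * (Q k * r * Q k) * P := by
  have hPQP_r : P * Q k * P * r = lam k • (P * Q k * r) :=
    calc P * Q k * P * r = P * (Q k * P * ∑ j, Q j) * r := by simp only [mul_assoc, hleft]
      _ = lam k • (P * Q k * r) := by
        rw [mul_mul_sum_eq_smul_of_balanced hbal hadj, mul_smul_comm, smul_mul_assoc]
  have hr_PQP : r * (P * Q k * P) = lam k • (r * Q k * P) :=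
    calc r * (P * Q k * P) = r * ((∑ j, Q j) * P * Q k) * P := by
          simp only [← mul_assoc, hright]
      _ = lam k • (r * Q k * P) := by
        rw [sum_mul_mul_eq_smul_of_balanced hbal hadj, mul_smul_comm, smul_mul_assoc]
  calc ((lam k)⁻¹ • (P * Q k * P)) * r * ((lam k)⁻¹ • (P * Q k * P))
      = ((lam k)⁻¹ * (lam k)⁻¹) • (P * Q k * P * r * (P * Q k * P)) := by
        simp only [smul_mul_assoc, mul_smul_comm, smul_smul]
    _ = ((lam k)⁻¹ * (lam k)⁻¹ * lam k * lam k) • (P * (Q k * r * Q k) * P) := by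
        rw [hPQP_r, smul_mul_assoc, mul_assoc, hr_PQP, mul_smul_comm, smul_smul, smul_smul]
        simp only [mul_assoc]
    _ = P * (Q k * r * Q k) * P := by
        rw [inv_mul_cancel_right₀ hk, inv_mul_cancel₀ hk, one_smul]

end Balanced

open scoped Classical in
theorem residual_of_pertaining_projector_general
    {n : ℕ} {J M : Type*} [Fintype J] [Fintype M]
    (P : Matrix (Fin n) (Fin n) ℝ)
    (Q : J → Matrix (Fin n) (Fin n) ℝ)
    (hQsym : ∀ j, (Q j)ᵀ = Q j)
    (lam : J → ℝ)
    (hbalQ : ∀ j, Q j * P * Q j = lam j • Q j)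
    (hadjQ : ∀ j k, j ≠ k → Q j * P * Q k = 0)
    (k : J) (hk : lam k ≠ 0)
    (R : M → Matrix (Fin n) (Fin n) ℝ)
    (hRsym : ∀ m, (R m)ᵀ = R m)
    (hRsub : ∀ m, R m * (∑ j, Q j) = R m)
    (mu : J → M → ℝ) :
    (lam k)⁻¹ • (P * Q k * P) -
        ∑ m ∈ Finset.univ.filter (fun m => mu k m ≠ 0),
          ((lam k)⁻¹ * (mu k m)⁻¹) •
            (((lam k)⁻¹ • (P * Q k * P)) * R m * ((lam k)⁻¹ • (P * Q k * P))) =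
      (lam k)⁻¹ •
        (P * (Q k - ∑ m ∈ Finset.univ.filter (fun m => mu k m ≠ 0),
          (mu k m)⁻¹ • (Q k * R m * Q k)) * P) := by
  have hQsum_sym : (∑ j, Q j)ᵀ = ∑ j, Q j := by simp only [transpose_sum, hQsym]
  have hsandwich (m : M) := pertaining_mul_mul_pertaining_of_balanced hbalQ hadjQ hk
    (mul_eq_self_of_mul_eq_self_of_transpose_eq hQsum_sym (hRsym m) (hRsub m)) (hRsub m)
  rw [mul_sub, sub_mul, smul_sub, Finset.mul_sum, Finset.sum_mul, Finset.smul_sum]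
  refine congrArg _ (Finset.sum_congr rfl fun m _ => ?_)
  rw [hsandwich, mul_smul_comm, smul_mul_assoc, smul_smul]

open scoped Classical in
/-- Residual identity in the proof of Theorem 5.1(d):
`(P ▷ Q_k) ⊢ 𝓡 = P ▷ (Q_k ⊢ 𝓡)`. -/
theorem residual_of_pertaining_projector
    {n : ℕ} {J M : Type*} [Fintype J] [Fintype M]
    (P : Matrix (Fin n) (Fin n) ℝ) (hPsym : Pᵀ = P) (hPidem : P * P = P)
    (Q : J → Matrix (Fin n) (Fin n) ℝ)
    (hQsym : ∀ j, (Q j)ᵀ = Q j) (hQidem : ∀ j, Q j * Q j = Q j)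
    (hQorth : ∀ j k, j ≠ k → Q j * Q k = 0)
    (lam : J → ℝ)
    (hbalQ : ∀ j, Q j * P * Q j = lam j • Q j)
    (hadjQ : ∀ j k, j ≠ k → Q j * P * Q k = 0)
    (k : J) (hk : lam k ≠ 0)
    (R : M → Matrix (Fin n) (Fin n) ℝ)
    (hRsym : ∀ m, (R m)ᵀ = R m) (hRidem : ∀ m, R m * R m = R m)
    (hRorth : ∀ m m', m ≠ m' → R m * R m' = 0)
    (hRsub : ∀ m, R m * (∑ j, Q j) = R m)
    (mu : J → M → ℝ)
    (hbalR : ∀ j m, R m * Q j * R m = mu j m • R m)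
    (hadjR : ∀ j m m', m ≠ m' → R m * Q j * R m' = 0) :
    (lam k)⁻¹ • (P * Q k * P) -
        ∑ m ∈ Finset.univ.filter (fun m => mu k m ≠ 0),
          ((lam k)⁻¹ * (mu k m)⁻¹) •
            (((lam k)⁻¹ • (P * Q k * P)) * R m * ((lam k)⁻¹ • (P * Q k * P))) =
      (lam k)⁻¹ •
        (P * (Q k - ∑ m ∈ Finset.univ.filter (fun m => mu k m ≠ 0),
          (mu k m)⁻¹ • (Q k * R m * Q k)) * P) :=
  residual_of_pertaining_projector_general P Q hQsym lam hbalQ hadjQ k hk R hRsym hRsub mu
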